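/- Let z₁, …, z_m be pairwise distinct complex numbers with |z_j| = 1 for all j, and let c₁, …, c_m ∈ ℂ. If the sequence n ↦ ∑_{j=1}^m c_j · z_j^n tends to 0 as n → ∞ (n ranging over natural numbers), then c_j = 0 for every j. -/

import Mathlib

/-!
Dividing by `z_k ^ n` turns the hypothesis into `∑ j, c_j w_j^n → 0` with `w_k = 1` and
`w_j ≠ 1` unimodular for `j ≠ k`. Taking Cesàro means kills every term with `w_j ≠ 1`
(its partial geometric sums stay bounded) and leaves `c_k`; since the Cesàro means of a
null sequence are null, `c_k = 0`.
-/

open Filter Finset Topology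

section CesaroPow

variable {𝕜 : Type*} [NormedField 𝕜]

lemma norm_geom_sum_le_of_norm_le_one {w : 𝕜} (hw : ‖w‖ ≤ 1) (hw1 : w ≠ 1) (N : ℕ) :
    ‖∑ n ∈ range N, w ^ n‖ ≤ 2 / ‖w - 1‖ := by
  rw [geom_sum_eq hw1, norm_div]
  gcongr
  calc ‖w ^ N - 1‖ ≤ ‖w ^ N‖ + ‖(1 : 𝕜)‖ := norm_sub_le _ _
    _ ≤ 1 + 1 := by gcongr <;> simp [pow_le_one₀ (norm_nonneg w) hw]
    _ = 2 := one_add_one_eq_two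

variable [NormedAlgebra ℝ 𝕜]

open scoped Classical in
lemma tendsto_cesaro_pow_of_norm_le_one {w : 𝕜} (hw : ‖w‖ ≤ 1) :
    Tendsto (fun N : ℕ => (N⁻¹ : ℝ) • ∑ n ∈ range N, w ^ n) atTop
      (𝓝 (if w = 1 then 1 else 0)) := by
  split_ifs with hw1
  · simpa only [hw1, one_pow] using (tendsto_const_nhds (x := (1 : 𝕜))).cesaro_smul
  · have hbound : Tendsto (fun N : ℕ => (N : ℝ)⁻¹ * (2 / ‖w - 1‖)) atTop (𝓝 0) := by
      simpa using (tendsto_inv_atTop_nhds_zero_nat (𝕜 := ℝ)).mul_const _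
    refine squeeze_zero_norm (fun N => ?_) hbound
    rw [norm_smul, norm_inv, Real.norm_natCast]
    exact mul_le_mul_of_nonneg_left (norm_geom_sum_le_of_norm_le_one hw hw1 N) (by positivity)

lemma coeff_eq_zero_of_tendsto_sum_mul_pow {ι : Type*} [Fintype ι] {w c : ι → 𝕜}
    (hw : ∀ j, ‖w j‖ ≤ 1) {k : ι} (hk : w k = 1) (hne : ∀ j ≠ k, w j ≠ 1)
    (h : Tendsto (fun n : ℕ => ∑ j, c j * w j ^ n) atTop (𝓝 0)) : c k = 0 := by
  classical
  have hmean : Tendsto (fun N : ℕ => (N⁻¹ : ℝ) • ∑ n ∈ range N, ∑ j, c j * w j ^ n) atTop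
      (𝓝 (∑ j, c j * if w j = 1 then 1 else 0)) := by
    simp only [sum_comm (s := range _), ← mul_sum, smul_sum]
    refine tendsto_finsetSum _ fun j _ => ?_
    simpa only [mul_smul_comm] using (tendsto_cesaro_pow_of_norm_le_one (hw j)).const_mul (c j)
  have hsum : (∑ j, c j * if w j = 1 then 1 else 0) = c k := by
    rw [sum_eq_single k (fun j _ hj => by simp [hne j hj]) (by simp), if_pos hk, mul_one]
  rw [← hsum]
  exact tendsto_nhds_unique hmean h.cesaro_smul

end CesaroPow

/-- If `z₁, …, z_m` are pairwise distinct unimodular complex numbers and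
`∑ j, c_j·z_j^n → 0` as `n → ∞`, then all `c_j` vanish. -/
theorem unimodular_exponentials_independent (m : ℕ) (z : Fin m → ℂ)
    (hz : Function.Injective z) (hz1 : ∀ j, ‖z j‖ = 1) (c : Fin m → ℂ)
    (h : Filter.Tendsto (fun n : ℕ => ∑ j, c j * z j ^ n) Filter.atTop (nhds 0)) :
    ∀ j, c j = 0 := by
  intro k
  have hzk : z k ≠ 0 := norm_ne_zero_iff.mp (by simp [hz1 k])
  refine coeff_eq_zero_of_tendsto_sum_mul_pow (w := fun j => z j / z k) (k := k)
    (fun j => by simp [hz1]) (div_self hzk)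
    (fun j hj => by simpa [div_eq_one_iff_eq hzk] using hz.ne hj) ?_
  have hdiv : (fun n : ℕ => ∑ j, c j * (z j / z k) ^ n) =
      fun n => (∑ j, c j * z j ^ n) / z k ^ n := by
    ext n
    simp only [div_pow, sum_div, mul_div_assoc]
  rw [hdiv, tendsto_zero_iff_norm_tendsto_zero]
  simpa [hz1 k] using tendsto_zero_iff_norm_tendsto_zero.mp h
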